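/- Let G be a finite simple graph on n ≥ 1 vertices with Kirchhoff (Laplacian) matrix K. Then for every 1 ≤ k ≤ n, the k-th smallest eigenvalue of K satisfies λ_k ≤ d_k + d_{k−1}, where d_1 ≤ … ≤ d_n are the vertex degrees of G listed in increasing order and d_0 = 0. -/

import Mathlib

/-!
By the Courant–Fischer principle, `λ_k` is at most the largest Rayleigh quotient of `K` on any
`k`-dimensional subspace. On the coordinate subspace of `k` vertices of smallest degree, the
quadratic form of `K` is that of the principal submatrix `K_S`, so it suffices to bound the
eigenvalues of `K_S`. This is Brauer's Cassini-oval argument: if `K_S y = μ y` with `μ` above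
every degree in `S`, and `u`, `w` carry the two largest entries of `|y|`, the rows `u` and `w` give
`(μ - d_u)(μ - d_w) ≤ d_u d_w`, hence `μ ≤ d_u + d_w ≤ d_k + d_{k-1}`.
-/

open Matrix Finset Module
open scoped RealInnerProductSpace

namespace OrthonormalBasis

variable {E ι : Type*} [NormedAddCommGroup E] [InnerProductSpace ℝ E] [Fintype ι]
  {T : E →ₗ[ℝ] E}

theorem inner_map_self_eq_sum (b : OrthonormalBasis ι ℝ E) {μ : ι → ℝ}
    (hT : ∀ j, T (b j) = μ j • b j) (x : E) :
    ⟪x, T x⟫ = ∑ j, μ j * b.repr x j ^ 2 := by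
  have hTx : T x = ∑ j, (μ j * b.repr x j) • b j := by
    conv_lhs => rw [← b.sum_repr x]
    simp only [map_sum, map_smul, hT, smul_smul, mul_comm]
  rw [hTx, inner_sum]
  refine sum_congr rfl fun j _ => ?_
  rw [real_inner_smul_right, real_inner_comm, ← b.repr_apply_apply]
  ring

theorem le_inner_map_self (b : OrthonormalBasis ι ℝ E) {μ : ι → ℝ}
    (hT : ∀ j, T (b j) = μ j • b j) {c : ℝ} {x : E}
    (hx : ∀ j, b.repr x j ≠ 0 → c ≤ μ j) : c * ‖x‖ ^ 2 ≤ ⟪x, T x⟫ := by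
  rw [b.inner_map_self_eq_sum hT, ← b.sum_sq_inner_right, mul_sum]
  refine sum_le_sum fun j _ => ?_
  rw [← b.repr_apply_apply]
  by_cases hj : b.repr x j = 0
  · simp [hj]
  · exact mul_le_mul_of_nonneg_right (hx j hj) (sq_nonneg _)

theorem inner_map_self_le (b : OrthonormalBasis ι ℝ E) {μ : ι → ℝ}
    (hT : ∀ j, T (b j) = μ j • b j) {c : ℝ} (hμ : ∀ j, μ j ≤ c) (x : E) :
    ⟪x, T x⟫ ≤ c * ‖x‖ ^ 2 := by
  rw [b.inner_map_self_eq_sum hT, ← b.sum_sq_inner_right, mul_sum]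
  refine sum_le_sum fun j _ => ?_
  rw [← b.repr_apply_apply]
  exact mul_le_mul_of_nonneg_right (hμ j) (sq_nonneg _)

theorem apply_sort_le_of_inner_map_self_le {m : ℕ} (b : OrthonormalBasis (Fin m) ℝ E)
    {μ : Fin m → ℝ} (hT : ∀ j, T (b j) = μ j • b j) (i : Fin m) (U : Submodule ℝ E)
    (hU : (i : ℕ) + 1 ≤ finrank ℝ U) {c : ℝ} (hc : ∀ x ∈ U, ⟪x, T x⟫ ≤ c * ‖x‖ ^ 2) :
    μ (Tuple.sort μ i) ≤ c := by
  set σ := Tuple.sort μ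
  have : FiniteDimensional ℝ E := b.toBasis.finiteDimensional_of_finite
  let W := Submodule.span ℝ (Set.range (b ∘ σ ∘ ((↑) : Ici i → Fin m)))
  have hW : finrank ℝ W = m - i := by
    rw [finrank_span_eq_card (b.orthonormal.linearIndependent.comp _
      (σ.injective.comp Subtype.val_injective)), Fintype.card_coe, Fin.card_Ici]
  obtain ⟨x, hxU, hxW, hx0⟩ : ∃ x ∈ U, x ∈ W ∧ x ≠ 0 := by
    by_contra! h
    have := Submodule.finrank_add_finrank_le_of_disjoint (Submodule.disjoint_def.2 h)
    rw [hW, finrank_eq_card_basis b.toBasis, Fintype.card_fin] at this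
    omega
  have hlow : μ (σ i) * ‖x‖ ^ 2 ≤ ⟪x, T x⟫ := by
    refine b.le_inner_map_self hT fun j hj => ?_
    obtain hi | hi := le_or_gt i (σ.symm j)
    · simpa [σ] using Tuple.monotone_sort μ hi
    · refine absurd ?_ hj
      rw [b.repr_apply_apply]
      refine Submodule.span_induction ?_ (by simp) (fun _ _ _ _ => ?_) (fun _ _ _ => ?_) hxW
      · rintro _ ⟨⟨j', hj'⟩, rfl⟩
        refine b.orthonormal.inner_eq_zero fun h => ?_
        subst h
        exact (mem_Ici.mp hj').not_gt (by simpa [σ] using hi)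
      · simp_all [inner_add_right]
      · simp_all [inner_smul_right]
  have hx : 0 < ‖x‖ ^ 2 := by positivity
  nlinarith [hc x hxU]

end OrthonormalBasis

theorem EuclideanSpace.norm_toLp_sq {ι : Type*} [Fintype ι] (x : ι → ℝ) :
    ‖(WithLp.toLp 2 x : EuclideanSpace ℝ ι)‖ ^ 2 = x ⬝ᵥ x := by
  rw [← real_inner_self_eq_norm_sq, EuclideanSpace.inner_toLp_toLp, star_trivial]

namespace Matrix

variable {ι κ : Type*} [Fintype ι] [DecidableEq ι]

theorem inner_toLp_toEuclideanLin_toLp (M : Matrix ι ι ℝ) (x : ι → ℝ) :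
    ⟪WithLp.toLp 2 x, toEuclideanLin M (WithLp.toLp 2 x)⟫ = x ⬝ᵥ (M *ᵥ x) := by
  simp [EuclideanSpace.inner_toLp_toLp, dotProduct_comm]

theorem transpose_mul_mul_submatrix_one {α : Type*} [NonAssocSemiring α] [Fintype κ]
    (P : Matrix ι ι α) (e : κ → ι) :
    ((1 : Matrix ι ι α).submatrix id e)ᵀ * P * (1 : Matrix ι ι α).submatrix id e =
      P.submatrix e e := by
  ext a b
  simp [mul_apply, one_apply]

theorem dotProduct_mulVec_submatrix_one {α : Type*} [CommSemiring α] [Fintype κ]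
    (P : Matrix ι ι α) (e : κ → ι) (z : κ → α) :
    ((1 : Matrix ι ι α).submatrix id e *ᵥ z) ⬝ᵥ (P *ᵥ ((1 : Matrix ι ι α).submatrix id e *ᵥ z)) =
      z ⬝ᵥ (P.submatrix e e *ᵥ z) := by
  rw [← transpose_mul_mul_submatrix_one, ← mulVec_mulVec, ← mulVec_mulVec, dotProduct_mulVec z,
    vecMul_transpose]

theorem sum_erase_abs_submatrix_le [Fintype κ] [DecidableEq κ] (M : Matrix ι ι ℝ) {e : κ → ι}
    (he : e.Injective) (i : κ) :
    ∑ j ∈ univ.erase i, |M.submatrix e e i j| ≤ ∑ v ∈ univ.erase (e i), |M (e i) v| := by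
  refine (sum_map (univ.erase i) ⟨e, he⟩ fun v => |M (e i) v|).symm.trans_le ?_
  refine sum_le_sum_of_subset_of_nonneg (fun v hv => ?_) fun _ _ _ => abs_nonneg _
  obtain ⟨j, hj, rfl⟩ := mem_map.mp hv
  simpa [he.ne_iff] using hj

theorem abs_sub_diag_mul_le {M : Matrix ι ι ℝ} {μ : ℝ} {y : ι → ℝ} (hμ : M *ᵥ y = μ • y) (i : ι)
    {r : ℝ} (hr : ∀ j ≠ i, |y j| ≤ r) :
    |μ - M i i| * |y i| ≤ (∑ j ∈ univ.erase i, |M i j|) * r := by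
  have hrow : (μ - M i i) * y i = ∑ j ∈ univ.erase i, M i j * y j := by
    have := congrFun hμ i
    rw [mulVec, dotProduct, ← add_sum_erase _ _ (mem_univ i)] at this
    simp only [Pi.smul_apply, smul_eq_mul] at this
    linarith
  calc |μ - M i i| * |y i| = |∑ j ∈ univ.erase i, M i j * y j| := by rw [← abs_mul, hrow]
    _ ≤ ∑ j ∈ univ.erase i, |M i j| * |y j| := by
      simpa only [abs_mul] using abs_sum_le_sum_abs (fun j => M i j * y j) (univ.erase i)
    _ ≤ ∑ j ∈ univ.erase i, |M i j| * r :=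
      sum_le_sum fun j hj => mul_le_mul_of_nonneg_left (hr j (ne_of_mem_erase hj)) (abs_nonneg _)
    _ = (∑ j ∈ univ.erase i, |M i j|) * r := by rw [sum_mul]

theorem eigenvalue_le_of_sum_erase_abs_le_diag {M : Matrix ι ι ℝ}
    (hrow : ∀ i, ∑ j ∈ univ.erase i, |M i j| ≤ M i i) {μ : ℝ} {y : ι → ℝ} (hy : y ≠ 0)
    (hμ : M *ᵥ y = μ • y) {B : ℝ} (hB₁ : ∀ i, M i i ≤ B)
    (hB₂ : ∀ i j, i ≠ j → M i i + M j j ≤ B) : μ ≤ B := by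
  by_contra! hBμ
  have hdiag : ∀ i, 0 ≤ M i i := fun i => (sum_nonneg fun _ _ => abs_nonneg _).trans (hrow i)
  have hrow_bound : ∀ i r, 0 ≤ r → (∀ j ≠ i, |y j| ≤ r) → (μ - M i i) * |y i| ≤ M i i * r :=
    fun i r hr hyr => by
      have := abs_sub_diag_mul_le hμ i hyr
      rw [abs_of_pos (by linarith [hB₁ i])] at this
      exact this.trans (mul_le_mul_of_nonneg_right (hrow i) hr)
  obtain ⟨i₀, hi₀⟩ := Function.ne_iff.mp hy
  obtain ⟨u, -, hu⟩ := exists_max_image univ (fun j => |y j|) ⟨i₀, mem_univ _⟩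
  have hyu : 0 < |y u| := (abs_pos.2 hi₀).trans_le (hu i₀ (mem_univ _))
  by_cases hrest : ∀ j ≠ u, y j = 0
  · have := hrow_bound u 0 le_rfl fun j hj => by simp [hrest j hj]
    nlinarith [hB₁ u]
  obtain ⟨j₀, hj₀u, hj₀⟩ : ∃ j ≠ u, y j ≠ 0 := by simpa using hrest
  obtain ⟨w, hw, hwmax⟩ :=
    exists_max_image (univ.erase u) (fun j => |y j|) ⟨j₀, mem_erase.2 ⟨hj₀u, mem_univ _⟩⟩
  have hyw : 0 < |y w| := (abs_pos.2 hj₀).trans_le (hwmax j₀ (mem_erase.2 ⟨hj₀u, mem_univ _⟩))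
  have hu' := hrow_bound u |y w| (abs_nonneg _) fun j hj => hwmax j (mem_erase.2 ⟨hj, mem_univ _⟩)
  have hw' := hrow_bound w |y u| (abs_nonneg _) fun j _ => hu j (mem_univ _)
  have hprod := mul_le_mul hu' hw' (by nlinarith [hB₁ w]) (by nlinarith [hdiag u])
  have hpos : 0 < μ * (μ - M u u - M w w) * (|y u| * |y w|) := by
    have := hB₂ u w (ne_of_mem_erase hw).symm
    have := hdiag u; have := hdiag w
    exact mul_pos (mul_pos (by linarith) (by linarith)) (mul_pos hyu hyw)
  nlinarith

namespace IsHermitian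

theorem toEuclideanLin_eigenvectorBasis {M : Matrix ι ι ℝ} (hM : M.IsHermitian) (j : ι) :
    toEuclideanLin M (hM.eigenvectorBasis j) = hM.eigenvalues j • hM.eigenvectorBasis j := by
  simp [toLpLin_apply, hM.mulVec_eigenvectorBasis]

theorem dotProduct_mulVec_le {M : Matrix ι ι ℝ} (hM : M.IsHermitian) {c : ℝ}
    (hc : ∀ j, hM.eigenvalues j ≤ c) (x : ι → ℝ) : x ⬝ᵥ (M *ᵥ x) ≤ c * (x ⬝ᵥ x) := by
  have := hM.eigenvectorBasis.inner_map_self_le hM.toEuclideanLin_eigenvectorBasis hc (.toLp 2 x)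
  rwa [inner_toLp_toEuclideanLin_toLp, EuclideanSpace.norm_toLp_sq] at this

theorem eigenvalues_sort_le {m : ℕ} {M : Matrix (Fin m) (Fin m) ℝ} (hM : M.IsHermitian)
    (i : Fin m) (U : Submodule ℝ (Fin m → ℝ)) (hU : (i : ℕ) + 1 ≤ finrank ℝ U) {c : ℝ}
    (hc : ∀ x ∈ U, x ⬝ᵥ (M *ᵥ x) ≤ c * (x ⬝ᵥ x)) :
    hM.eigenvalues (Tuple.sort hM.eigenvalues i) ≤ c := by
  refine hM.eigenvectorBasis.apply_sort_le_of_inner_map_self_le hM.toEuclideanLin_eigenvectorBasis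
    i (U.map (WithLp.linearEquiv 2 ℝ (Fin m → ℝ)).symm.toLinearMap) ?_ ?_
  · rwa [LinearEquiv.finrank_map_eq]
  · rintro _ ⟨x, hx, rfl⟩
    have := hc x hx
    rwa [← inner_toLp_toEuclideanLin_toLp, ← EuclideanSpace.norm_toLp_sq] at this

theorem eigenvalues_sort_le_of_submatrix [Fintype κ] [DecidableEq κ] {m : ℕ}
    {M : Matrix (Fin m) (Fin m) ℝ} (hM : M.IsHermitian) {e : κ → Fin m} (he : e.Injective)
    (i : Fin m) (hi : (i : ℕ) < Fintype.card κ) (hS : (M.submatrix e e).IsHermitian) {c : ℝ}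
    (hc : ∀ j, hS.eigenvalues j ≤ c) : hM.eigenvalues (Tuple.sort hM.eigenvalues i) ≤ c := by
  -- `R` is extension by zero along `e`; the test space is its range.
  set R := (1 : Matrix (Fin m) (Fin m) ℝ).submatrix id e
  have hR : Function.Injective R.mulVecLin := fun z z' h => by
    have hRR : Rᵀ * R = 1 := by
      rw [← Matrix.mul_one Rᵀ, transpose_mul_mul_submatrix_one, submatrix_one e he]
    simpa [mulVec_mulVec, hRR] using congrArg (Rᵀ *ᵥ ·) h
  refine hM.eigenvalues_sort_le i (LinearMap.range R.mulVecLin) ?_ ?_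
  · rw [LinearMap.finrank_range_of_inj hR, finrank_fintype_fun_eq_card]
    omega
  · rintro _ ⟨z, rfl⟩
    have hsq := dotProduct_mulVec_submatrix_one 1 e z
    rw [submatrix_one e he, one_mulVec, one_mulVec] at hsq
    rw [mulVecLin_apply, dotProduct_mulVec_submatrix_one, hsq]
    exact hS.dotProduct_mulVec_le hc z

end IsHermitian

end Matrix

namespace SimpleGraph

variable {V R : Type*} [Fintype V] [DecidableEq V] (G : SimpleGraph V) [DecidableRel G.Adj]

theorem lapMatrix_apply_self [AddGroupWithOne R] (v : V) : G.lapMatrix R v v = G.degree v := by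
  simp [lapMatrix, degMatrix]

variable [Ring R] [LinearOrder R] [IsStrictOrderedRing R]

theorem abs_lapMatrix_apply_of_ne {v w : V} (h : v ≠ w) :
    |G.lapMatrix R v w| = if G.Adj v w then 1 else 0 := by
  by_cases hvw : G.Adj v w <;> simp [lapMatrix, degMatrix, h, hvw]

theorem sum_erase_abs_lapMatrix (v : V) :
    ∑ w ∈ univ.erase v, |G.lapMatrix R v w| = G.degree v := by
  rw [degree_eq_sum_if_adj, ← add_sum_erase _ _ (mem_univ v), if_neg (G.irrefl), zero_add]
  exact sum_congr rfl fun w hw => G.abs_lapMatrix_apply_of_ne (ne_of_mem_erase hw).symm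

theorem eigenvalues_lapMatrix_submatrix_le {κ : Type*} [Fintype κ] [DecidableEq κ] {e : κ → V}
    (he : e.Injective) (hS : ((G.lapMatrix ℝ).submatrix e e).IsHermitian) {B : ℝ}
    (hB₁ : ∀ i, (G.degree (e i) : ℝ) ≤ B)
    (hB₂ : ∀ i j, i ≠ j → (G.degree (e i) + G.degree (e j) : ℝ) ≤ B) (j : κ) :
    hS.eigenvalues j ≤ B := by
  refine eigenvalue_le_of_sum_erase_abs_le_diag (fun i => ?_) ?_ (hS.mulVec_eigenvectorBasis j)
    (by simpa [lapMatrix_apply_self] using hB₁) (by simpa [lapMatrix_apply_self] using hB₂)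
  · exact (sum_erase_abs_submatrix_le _ he i).trans_eq
      ((G.sum_erase_abs_lapMatrix _).trans (G.lapMatrix_apply_self _).symm)
  · simpa using hS.eigenvectorBasis.orthonormal.ne_zero j

end SimpleGraph

theorem Monotone.apply_add_apply_le {α : Type*} [AddCommMonoid α] [PartialOrder α]
    [IsOrderedAddMonoid α] {n : ℕ} {d : Fin n → α} (hd : Monotone d) {i j p q : Fin n}
    (hij : i < j) (hjq : j ≤ q) (hpq : (p : ℕ) + 1 = q) : d i + d j ≤ d p + d q :=
  add_le_add (hd (Fin.le_def.2 (by omega))) (hd hjq)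

/-- For a finite simple graph on `n ≥ 1` vertices with Kirchhoff (Laplacian)
matrix `K`, the `k`-th smallest eigenvalue satisfies `λ_k ≤ d_k + d_{k-1}`,
where `d_1 ≤ ⋯ ≤ d_n` are the sorted vertex degrees and `d_0 = 0`. -/
theorem graph_laplacian_eigenvalue_upper_bound
    (n : ℕ) (G : SimpleGraph (Fin n)) [DecidableRel G.Adj]
    (hK : (G.lapMatrix ℝ).IsHermitian)
    (lam : Fin n → ℝ)
    (hlam : lam = hK.eigenvalues ∘ Tuple.sort hK.eigenvalues)
    (d : Fin n → ℕ)
    (hd : d = (fun v => G.degree v) ∘ Tuple.sort (fun v => G.degree v)) :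
    ∀ (k : ℕ) (hk1 : 1 ≤ k) (hkn : k ≤ n),
      lam ⟨k - 1, by omega⟩ ≤
        (d ⟨k - 1, by omega⟩ : ℝ) +
          (if h : 2 ≤ k then (d ⟨k - 2, by omega⟩ : ℝ) else 0) := by
  intro k hk1 hkn
  set B : ℝ := d ⟨k - 1, by omega⟩ + if h : 2 ≤ k then (d ⟨k - 2, by omega⟩ : ℝ) else 0
  let e : Fin k → Fin n := Tuple.sort (fun v => G.degree v) ∘ Fin.castLE hkn
  have he : e.Injective := (Equiv.injective _).comp (Fin.castLE_injective hkn)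
  have hdeg : ∀ j, G.degree (e j) = d (Fin.castLE hkn j) := fun j => by simp [hd, e]
  have hmono : Monotone d := hd ▸ Tuple.monotone_sort _
  have hB₁ : ∀ j, (G.degree (e j) : ℝ) ≤ B := fun j => by
    have h₁ : (d (Fin.castLE hkn j) : ℝ) ≤ d ⟨k - 1, by omega⟩ :=
      mod_cast hmono (Fin.le_def.2 (by simp only [Fin.val_castLE]; omega))
    have h₂ : (0 : ℝ) ≤ if h : 2 ≤ k then (d ⟨k - 2, by omega⟩ : ℝ) else 0 := by
      split_ifs <;> positivity
    rw [hdeg]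
    linarith
  have hB₂ : ∀ i j, i ≠ j → (G.degree (e i) + G.degree (e j) : ℝ) ≤ B := fun i j hij => by
    wlog hlt : i < j generalizing i j
    · linarith [this j i hij.symm (hij.lt_or_gt.resolve_left hlt)]
    have h2 : 2 ≤ k := by omega
    simp only [hdeg, B, dif_pos h2, add_comm (d ⟨k - 1, _⟩ : ℝ)]
    exact_mod_cast hmono.apply_add_apply_le ((Fin.castLE_lt_castLE_iff hkn).2 hlt)
      (Fin.le_def.2 (by simp; omega)) (by simp; omega)
  rw [hlam]
  exact hK.eigenvalues_sort_le_of_submatrix he _ (by simp; omega) (hK.submatrix e)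
    (G.eigenvalues_lapMatrix_submatrix_le he _ hB₁ hB₂)
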